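/- arXiv:1112.0415 — 2 statements merged into one kernel-verified Lean document; each statement's English description precedes it below -/
import Mathlib

section
/- For every g ∈ L²((0,1),ℂ) with μ₀(g) = 0 and every ε > 0, there exists f ∈ L²((0,1),ℂ) with μ₀(f) = μ₁(f) = 0 such that ‖P(g−f)‖_{L²(0,1)} < ε. (Density of the doubly-constrained space V = {f ∈ L² : μ₀(f) = μ₁(f) = 0} in the mean-zero part of H⁻¹(T).) -/
open MeasureTheory intervalIntegral

/-- `𝓘g(x) = ∫₀ˣ g(y) dy` -/
noncomputable def Iprim (g : ℝ → ℂ) (x : ℝ) : ℂ := ∫ y in (0:ℝ)..x, g y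

/-- `Pg(x) = 𝓘g(x) − ∫₀¹ 𝓘g(z) dz` -/
noncomputable def Pfun (g : ℝ → ℂ) (x : ℝ) : ℂ := Iprim g x - ∫ z in (0:ℝ)..1, Iprim g z

/-- `μ₀(g) = ∫₀¹ g(x) dx` -/
noncomputable def mu0 (g : ℝ → ℂ) : ℂ := ∫ x in (0:ℝ)..1, g x

/-- `μ₁(g) = ∫₀¹ (1−x) g(x) dx` -/
noncomputable def mu1 (g : ℝ → ℂ) : ℂ := ∫ x in (0:ℝ)..1, ((1 - x : ℝ) : ℂ) * g x

/-!
Put `m = μ₁(g)` and `ψₙ(x) = 1 - (1 - x)ⁿ - xⁿ`, and take `f = g - s ψₙ'`. Because `ψₙ` vanishes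
at both endpoints, `μ₀(ψₙ') = 0` and, integrating by parts against `1 - x`,
`μ₁(ψₙ') = ∫ψₙ = (n - 1)/(n + 1)`; so `s = m (n + 1)/(n - 1)` gives `μ₀(f) = μ₁(f) = 0`.
Moreover `P(g - f) = s (ψₙ - ∫ψₙ)`, and the variance of `ψₙ` is at most `∫(ψₙ - 1)² ≤ 2/(n + 1)`:
the plateaus `ψₙ` converge to the constant `1` in `L²`, so `‖P(g - f)‖ → 0`.
-/

open Set

lemma Continuous.memLp_restrict_Ioo {E : Type*} [NormedAddCommGroup E] {f : ℝ → E}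
    (hf : Continuous f) (p : ENNReal) (a b : ℝ) :
    MemLp f p (volume.restrict (Ioo a b)) := by
  obtain ⟨C, hC⟩ := (isCompact_Icc (a := a) (b := b)).exists_bound_of_continuousOn hf.continuousOn
  refine (memLp_top_of_bound hf.aestronglyMeasurable C ?_).mono_exponent le_top
  filter_upwards [ae_restrict_mem measurableSet_Ioo] with x hx using hC x (Ioo_subset_Icc_self hx)

lemma MeasureTheory.MemLp.intervalIntegrable {E : Type*} [NormedAddCommGroup E] {g : ℝ → E}
    {p : ENNReal} (hp : 1 ≤ p) {a b : ℝ} (hab : a ≤ b) (hg : MemLp g p (volume.restrict (Ioo a b))) :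
    IntervalIntegrable g volume a b := by
  rw [intervalIntegrable_iff_integrableOn_Ioc_of_le hab,
    integrableOn_Ioc_iff_integrableOn_Ioo enorm_ne_top]
  exact hg.integrable hp

lemma Iprim_const_mul (s : ℂ) (g : ℝ → ℂ) (x : ℝ) : Iprim (fun y => s * g y) x = s * Iprim g x :=
  intervalIntegral.integral_const_mul s g

lemma Pfun_const_mul (s : ℂ) (g : ℝ → ℂ) (x : ℝ) : Pfun (fun y => s * g y) x = s * Pfun g x := by
  simp only [Pfun, Iprim_const_mul, intervalIntegral.integral_const_mul, mul_sub]

lemma mu0_const_mul (s : ℂ) (g : ℝ → ℂ) : mu0 (fun y => s * g y) = s * mu0 g :=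
  intervalIntegral.integral_const_mul s g

lemma mu1_const_mul (s : ℂ) (g : ℝ → ℂ) : mu1 (fun y => s * g y) = s * mu1 g := by
  simp only [mu1, mul_left_comm _ s, intervalIntegral.integral_const_mul]

lemma mu0_sub {f g : ℝ → ℂ} (hf : IntervalIntegrable f volume 0 1)
    (hg : IntervalIntegrable g volume 0 1) : mu0 (fun y => f y - g y) = mu0 f - mu0 g :=
  intervalIntegral.integral_sub hf hg

lemma mu1_sub {f g : ℝ → ℂ} (hf : IntervalIntegrable f volume 0 1)
    (hg : IntervalIntegrable g volume 0 1) : mu1 (fun y => f y - g y) = mu1 f - mu1 g := by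
  have hw : ContinuousOn (fun x : ℝ => ((1 - x : ℝ) : ℂ)) (uIcc 0 1) := by fun_prop
  simp only [mu1, mul_sub]
  exact intervalIntegral.integral_sub (hf.continuousOn_mul hw) (hg.continuousOn_mul hw)

section Antiderivative

variable {ψ ψ' : ℝ → ℝ}

lemma Iprim_eq_sub_of_hasDerivAt (hψ : ∀ x, HasDerivAt ψ (ψ' x) x) (hψ' : Continuous ψ') (x : ℝ) :
    Iprim (fun y => (ψ' y : ℂ)) x = ψ x - ψ 0 := by
  rw [Iprim, intervalIntegral.integral_ofReal, integral_eq_sub_of_hasDerivAt (fun y _ => hψ y)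
    (hψ'.intervalIntegrable _ _), Complex.ofReal_sub]

lemma Pfun_eq_sub_integral_of_hasDerivAt (hψ : ∀ x, HasDerivAt ψ (ψ' x) x) (hψ' : Continuous ψ')
    (x : ℝ) :
    Pfun (fun y => (ψ' y : ℂ)) x = ψ x - ∫ z in (0:ℝ)..1, ψ z := by
  have hc : Continuous ψ := continuous_iff_continuousAt.2 fun x => (hψ x).continuousAt
  simp only [Pfun, Iprim_eq_sub_of_hasDerivAt hψ hψ']
  rw [intervalIntegral.integral_sub
    ((by fun_prop : Continuous fun z => (ψ z : ℂ)).intervalIntegrable _ _) intervalIntegrable_const,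
    intervalIntegral.integral_ofReal]
  simp

lemma mu0_eq_sub_of_hasDerivAt (hψ : ∀ x, HasDerivAt ψ (ψ' x) x) (hψ' : Continuous ψ') :
    mu0 (fun y => (ψ' y : ℂ)) = ψ 1 - ψ 0 :=
  Iprim_eq_sub_of_hasDerivAt hψ hψ' 1

lemma mu1_eq_integral_sub_of_hasDerivAt (hψ : ∀ x, HasDerivAt ψ (ψ' x) x) (hψ' : Continuous ψ') :
    mu1 (fun y => (ψ' y : ℂ)) = (∫ z in (0:ℝ)..1, ψ z) - ψ 0 := by
  have hc : Continuous ψ := continuous_iff_continuousAt.2 fun x => (hψ x).continuousAt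
  have hprod : ∀ x, HasDerivAt (fun x => (1 - x) * ψ x) ((1 - x) * ψ' x - ψ x) x := fun x =>
    (((hasDerivAt_id' x).const_sub 1).fun_mul (hψ x)).congr_deriv (by ring)
  have key := integral_eq_sub_of_hasDerivAt (fun x _ => hprod x)
    ((by fun_prop : Continuous fun x => (1 - x) * ψ' x - ψ x).intervalIntegrable 0 1)
  rw [intervalIntegral.integral_sub
    ((by fun_prop : Continuous fun x => (1 - x) * ψ' x).intervalIntegrable _ _)
    (hc.intervalIntegrable _ _)] at key
  simp only [mu1, ← Complex.ofReal_mul, intervalIntegral.integral_ofReal]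
  norm_num at key
  rw [show ∫ x in (0:ℝ)..1, (1 - x) * ψ' x = (∫ z in (0:ℝ)..1, ψ z) - ψ 0 by linarith]
  push_cast; ring

end Antiderivative

lemma integral_sub_integral_sq_le {h : ℝ → ℝ} (hh : Continuous h) (a : ℝ) :
    ∫ x in (0:ℝ)..1, (h x - ∫ z in (0:ℝ)..1, h z) ^ 2 ≤ ∫ x in (0:ℝ)..1, (h x - a) ^ 2 := by
  set c := ∫ z in (0:ℝ)..1, h z
  have hdiff :
      (∫ x in (0:ℝ)..1, (h x - a) ^ 2) - ∫ x in (0:ℝ)..1, (h x - c) ^ 2 = (c - a) ^ 2 := by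
    rw [← intervalIntegral.integral_sub (by apply Continuous.intervalIntegrable; fun_prop)
      (by apply Continuous.intervalIntegrable; fun_prop)]
    have hpt : ∀ x, (h x - a) ^ 2 - (h x - c) ^ 2 = 2 * (c - a) * h x + (a ^ 2 - c ^ 2) :=
      fun x => by ring
    simp only [hpt]
    rw [intervalIntegral.integral_add ((hh.intervalIntegrable _ _).const_mul _)
      intervalIntegrable_const, intervalIntegral.integral_const_mul, intervalIntegral.integral_const]
    simp only [sub_zero, one_smul]; ring
  nlinarith [sq_nonneg (c - a)]

noncomputable def plateau (n : ℕ) (x : ℝ) : ℝ := 1 - (1 - x) ^ n - x ^ n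

noncomputable def plateauDeriv (n : ℕ) (x : ℝ) : ℝ := n * (1 - x) ^ (n - 1) - n * x ^ (n - 1)

lemma hasDerivAt_plateau (n : ℕ) (x : ℝ) : HasDerivAt (plateau n) (plateauDeriv n x) x := by
  have h1 := ((hasDerivAt_id' x).const_sub 1).fun_pow n
  have h2 := (hasDerivAt_id' x).fun_pow n
  exact ((h1.const_sub 1).sub h2).congr_deriv (by simp [plateauDeriv])

@[fun_prop]
lemma continuous_plateauDeriv (n : ℕ) : Continuous (plateauDeriv n) := by
  unfold plateauDeriv; fun_prop

lemma plateau_zero {n : ℕ} (hn : n ≠ 0) : plateau n 0 = 0 := by simp [plateau, hn]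

lemma plateau_one {n : ℕ} (hn : n ≠ 0) : plateau n 1 = 0 := by simp [plateau, hn]

lemma integral_one_sub_pow_add_pow (n : ℕ) :
    ∫ x in (0:ℝ)..1, ((1 - x) ^ n + x ^ n) = 2 / ((n : ℝ) + 1) := by
  rw [intervalIntegral.integral_add (by apply Continuous.intervalIntegrable; fun_prop)
      (by apply Continuous.intervalIntegrable; fun_prop),
    intervalIntegral.integral_comp_sub_left (fun x => x ^ n), integral_pow]
  simp; ring

lemma integral_plateau (n : ℕ) : ∫ x in (0:ℝ)..1, plateau n x = 1 - 2 / ((n : ℝ) + 1) := by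
  simp only [plateau, sub_sub]
  rw [intervalIntegral.integral_sub intervalIntegrable_const
    (by apply Continuous.intervalIntegrable; fun_prop), integral_one_sub_pow_add_pow]
  simp

lemma integral_plateau_sub_one_sq_le {n : ℕ} (hn : n ≠ 0) :
    ∫ x in (0:ℝ)..1, (plateau n x - 1) ^ 2 ≤ 2 / ((n : ℝ) + 1) := by
  rw [← integral_one_sub_pow_add_pow]
  refine intervalIntegral.integral_mono_on zero_le_one
    (by apply Continuous.intervalIntegrable; unfold plateau; fun_prop)
    (by apply Continuous.intervalIntegrable; fun_prop) fun x ⟨hx0, hx1⟩ => ?_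
  have ha := pow_le_of_le_one (sub_nonneg.2 hx1) (sub_le_self 1 hx0) hn
  have hb := pow_le_of_le_one hx0 hx1 hn
  have hu : 0 ≤ (1 - x) ^ n + x ^ n := by positivity
  -- on `[0, 1]`, `plateau n x = 1 - u` with `0 ≤ u ≤ 1`, so `(plateau n x - 1) ^ 2 = u ^ 2 ≤ u`
  have hsq : (plateau n x - 1) ^ 2 = ((1 - x) ^ n + x ^ n) ^ 2 := by unfold plateau; ring
  nlinarith

lemma integral_norm_Pfun_sq_le {n : ℕ} (hn : n ≠ 0) (s : ℂ) :
    ∫ x in (0:ℝ)..1, ‖Pfun (fun y => s * plateauDeriv n y) x‖ ^ 2 ≤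
      ‖s‖ ^ 2 * (2 / ((n : ℝ) + 1)) := by
  simp only [Pfun_const_mul, Pfun_eq_sub_integral_of_hasDerivAt (hasDerivAt_plateau n)
    (continuous_plateauDeriv n), ← Complex.ofReal_sub, norm_mul, Complex.norm_real,
    Real.norm_eq_abs, mul_pow, sq_abs, intervalIntegral.integral_const_mul]
  gcongr
  exact (integral_sub_integral_sq_le (by unfold plateau; fun_prop) 1).trans
    (integral_plateau_sub_one_sq_le hn)

/-- Density of `V = {f ∈ L² : μ₀(f) = μ₁(f) = 0}` in the mean-zero part of `H⁻¹(T)`: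
for every `g ∈ L²` with `μ₀(g) = 0` and every `ε > 0` there is `f ∈ V` with
`‖P(g−f)‖_{L²} < ε`. -/
theorem stmt7 (g : ℝ → ℂ)
    (hg : MemLp g 2 (volume.restrict (Set.Ioo (0:ℝ) 1)))
    (hg0 : mu0 g = 0) :
    ∀ ε : ℝ, 0 < ε →
      ∃ f : ℝ → ℂ, MemLp f 2 (volume.restrict (Set.Ioo (0:ℝ) 1)) ∧
        mu0 f = 0 ∧ mu1 f = 0 ∧
        ((∫ x in (0:ℝ)..1, ‖Pfun (fun y => g y - f y) x‖ ^ 2) ^ ((1:ℝ)/2)) < ε := by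
  intro ε hε
  obtain ⟨n, hn⟩ := exists_nat_gt (max 2 (18 * ‖mu1 g‖ ^ 2 / ε ^ 2))
  rw [max_lt_iff, div_lt_iff₀ (by positivity)] at hn
  have hn0 : n ≠ 0 := by rintro rfl; norm_num at hn
  set A : ℝ := 1 - 2 / ((n : ℝ) + 1)
  have hA : 1 / 3 ≤ A := by
    rw [le_sub_comm, div_le_iff₀ (by positivity)]; linarith
  set s : ℂ := mu1 g / A
  have hs : ‖s‖ ≤ 3 * ‖mu1 g‖ := by
    rw [norm_div, Complex.norm_real, Real.norm_of_nonneg (by linarith), div_le_iff₀ (by linarith)]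
    nlinarith [norm_nonneg (mu1 g)]
  have hgi := hg.intervalIntegrable one_le_two zero_le_one
  have hdi : IntervalIntegrable (fun y => s * plateauDeriv n y) volume 0 1 :=
    (by fun_prop : Continuous _).intervalIntegrable 0 1
  refine ⟨fun y => g y - s * plateauDeriv n y,
    hg.sub ((by fun_prop : Continuous _).memLp_restrict_Ioo _ _ _), ?_, ?_, ?_⟩
  · rw [mu0_sub hgi hdi, hg0, mu0_const_mul, mu0_eq_sub_of_hasDerivAt (hasDerivAt_plateau n)
      (continuous_plateauDeriv n), plateau_one hn0, plateau_zero hn0]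
    simp
  · rw [mu1_sub hgi hdi, mu1_const_mul, mu1_eq_integral_sub_of_hasDerivAt (hasDerivAt_plateau n)
      (continuous_plateauDeriv n), integral_plateau, plateau_zero hn0, Complex.ofReal_zero,
      sub_zero, div_mul_cancel₀ _ (Complex.ofReal_ne_zero.2 (by linarith)), sub_self]
  · simp only [sub_sub_cancel]
    rw [← Real.sqrt_eq_rpow, Real.sqrt_lt' hε]
    calc _ ≤ ‖s‖ ^ 2 * (2 / ((n : ℝ) + 1)) := integral_norm_Pfun_sq_le hn0 s
      _ ≤ (3 * ‖mu1 g‖) ^ 2 * (2 / ((n : ℝ) + 1)) := by gcongr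
      _ < ε ^ 2 := by
        rw [mul_div_assoc', div_lt_iff₀ (by positivity)]; nlinarith
end

section
/- There exists a constant C > 0 such that for every g ∈ L²((0,1),ℂ) one has |μ₁(g)|² ≤ C·‖g‖_{L²(0,1)}·(‖Pg‖²_{L²(0,1)} + |μ₀(g)|²)^{1/2}; i.e., the first-moment functional satisfies an interpolation-type estimate between the L² norm and the H⁻¹(T)-type norm. -/
open MeasureTheory intervalIntegral

/-!
Fubini gives `μ₁(g) = ∫₀¹ 𝓘g`, so `μ₁(g) = 𝓘g(x) - Pg(x)` for every `x`. Since `𝓘g(0) = 0`,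
Cauchy–Schwarz gives `|𝓘g(x)| ≤ √x ‖g‖`, and averaging over `x ∈ [0, s²]` yields
`|μ₁(g)| ≤ s ‖g‖ + ‖Pg‖ / s` for `0 < s ≤ 1`; for `s > 1` this follows from `|μ₁(g)| ≤ ‖g‖`.
Minimising over `s` gives `|μ₁(g)|² ≤ 4 ‖g‖ ‖Pg‖`.
-/

open Set Filter Topology

lemma le_two_sqrt_mul_of_forall_le {x A q : ℝ} (hA : 0 ≤ A) (hq : 0 ≤ q)
    (h : ∀ s > 0, x ≤ A * s + q / s) : x ≤ 2 * √(A * q) := by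
  -- for `A, q > 0` the infimum is attained at `s = √(q / A)`; perturb to get there
  have hε : ∀ ε > 0, x ≤ 2 * √((A + ε) * (q + ε)) := by
    intro ε hε
    have hAε : 0 < A + ε := by linarith
    have hqε : 0 < q + ε := by linarith
    have hs : 0 < √(q + ε) / √(A + ε) := by positivity
    calc x ≤ A * (√(q + ε) / √(A + ε)) + q / (√(q + ε) / √(A + ε)) := h _ hs
      _ ≤ (A + ε) * (√(q + ε) / √(A + ε)) + (q + ε) / (√(q + ε) / √(A + ε)) := by
          gcongr <;> linarith
      _ = 2 * √((A + ε) * (q + ε)) := by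
          have hA' := Real.sq_sqrt hAε.le
          have hq' := Real.sq_sqrt hqε.le
          have : 0 < √(A + ε) := Real.sqrt_pos.2 hAε
          have : 0 < √(q + ε) := Real.sqrt_pos.2 hqε
          rw [Real.sqrt_mul hAε.le]
          field_simp
          rw [hA', hq']
          ring
  have hlim : Tendsto (fun ε => 2 * √((A + ε) * (q + ε))) (𝓝[>] 0) (𝓝 (2 * √(A * q))) := by
    have hc : Continuous fun ε : ℝ => 2 * √((A + ε) * (q + ε)) := by fun_prop
    simpa using (hc.tendsto 0).mono_left nhdsWithin_le_nhds
  exact ge_of_tendsto hlim (eventually_nhdsWithin_of_forall hε)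

lemma integral_le_sqrt_measureReal_mul_integral_sq {α : Type*} [MeasurableSpace α]
    {μ : Measure α} [IsFiniteMeasure μ] {f : α → ℝ} (hf : Integrable f μ)
    (hf2 : Integrable (fun x => f x ^ 2) μ) :
    ∫ x, f x ∂μ ≤ √(μ.real univ * ∫ x, f x ^ 2 ∂μ) := by
  refine (le_two_sqrt_mul_of_forall_le (A := μ.real univ / 2) (q := (∫ x, f x ^ 2 ∂μ) / 2)
    (by positivity) (by positivity) fun t ht => ?_).trans_eq ?_
  -- AM-GM `f ≤ t / 2 + f² / (2t)`, then optimise over `t`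
  · calc ∫ x, f x ∂μ ≤ ∫ x, (t / 2 + f x ^ 2 / (2 * t)) ∂μ := by
          refine integral_mono hf ((integrable_const _).add (hf2.div_const _)) fun x => ?_
          have h2t : 0 < 2 * t := by positivity
          rw [div_add_div _ _ two_ne_zero h2t.ne', le_div_iff₀ (by positivity)]
          nlinarith [sq_nonneg (f x - t)]
      _ = μ.real univ / 2 * t + (∫ x, f x ^ 2 ∂μ) / 2 / t := by
          rw [integral_add (integrable_const _) (hf2.div_const _), MeasureTheory.integral_const,
            MeasureTheory.integral_div, smul_eq_mul]
          field_simp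
  · rw [← Real.sqrt_sq zero_le_two, ← Real.sqrt_mul (sq_nonneg 2)]
    ring_nf

lemma MeasureTheory.IntegrableOn.intervalIntegrable_of_mem_Icc {E : Type*} [NormedAddCommGroup E]
    {f : ℝ → E} {a b x : ℝ} (hf : IntegrableOn f (Ioc a b)) (hx : x ∈ Icc a b) :
    IntervalIntegrable f volume a x :=
  (intervalIntegrable_iff_integrableOn_Ioc_of_le hx.1).2 (hf.mono_set (Ioc_subset_Ioc_right hx.2))

lemma intervalIntegral_le_sqrt_mul_integral_sq {f : ℝ → ℝ} {a b x : ℝ}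
    (hf : IntegrableOn f (Ioc a b)) (hf2 : IntegrableOn (fun y => f y ^ 2) (Ioc a b))
    (hx : x ∈ Icc a b) :
    ∫ y in a..x, f y ≤ √((x - a) * ∫ y in a..b, f y ^ 2) := by
  have hCS : ∫ y in a..x, f y ≤ √((x - a) * ∫ y in a..x, f y ^ 2) := by
    simpa [integral_of_le hx.1, Real.volume_real_Ioc_of_le hx.1] using
      integral_le_sqrt_measureReal_mul_integral_sq (hf.intervalIntegrable_of_mem_Icc hx).1
        (hf2.intervalIntegrable_of_mem_Icc hx).1
  refine hCS.trans (Real.sqrt_le_sqrt (mul_le_mul_of_nonneg_left ?_ (sub_nonneg.2 hx.1)))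
  exact integral_mono_interval le_rfl hx.1 hx.2 (ae_of_all _ fun y => sq_nonneg _)
    (hf2.intervalIntegrable_of_mem_Icc (right_mem_Icc.2 (hx.1.trans hx.2)))

theorem integral_integral_eq_integral_sub_smul {E : Type*} [NormedAddCommGroup E]
    [NormedSpace ℝ E] [CompleteSpace E] {f : ℝ → E} {a b : ℝ} (hab : a ≤ b)
    (hf : IntegrableOn f (Ioc a b)) :
    ∫ x in a..b, ∫ y in a..x, f y = ∫ y in a..b, (b - y) • f y := by
  set ν := volume.restrict (Ioc a b)
  set F : ℝ × ℝ → E := {p : ℝ × ℝ | p.2 ≤ p.1}.indicator fun p => f p.2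
  have hF : Integrable F (ν.prod ν) :=
    (hf.comp_snd ν).indicator (measurableSet_le measurable_snd measurable_fst)
  have inner_y : ∀ x ∈ Ioc a b, ∫ y, F (x, y) ∂ν = ∫ y in a..x, f y := by
    intro x hx
    have hset : Iic x ∩ Ioc a b = Ioc a x := by
      ext y; simp only [mem_inter_iff, mem_Iic, mem_Ioc]
      exact ⟨fun h => ⟨h.2.1, h.1⟩, fun h => ⟨h.2, h.1, h.2.trans hx.2⟩⟩
    change ∫ y, (Iic x).indicator f y ∂ν = _
    rw [MeasureTheory.integral_indicator measurableSet_Iic,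
      Measure.restrict_restrict measurableSet_Iic, hset, integral_of_le hx.1.le]
  have inner_x : ∀ y ∈ Ioc a b, ∫ x, F (x, y) ∂ν = (b - y) • f y := by
    intro y hy
    have hset : Ici y ∩ Ioc a b = Icc y b := by
      ext x; simp only [mem_inter_iff, mem_Ici, mem_Ioc, mem_Icc]
      exact ⟨fun h => ⟨h.1, h.2.2⟩, fun h => ⟨h.1, hy.1.trans_le h.1, h.2⟩⟩
    change ∫ x, (Ici y).indicator (fun _ => f y) x ∂ν = _
    rw [MeasureTheory.integral_indicator measurableSet_Ici,
      Measure.restrict_restrict measurableSet_Ici, hset, setIntegral_const,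
      Real.volume_real_Icc_of_le hy.2]
  rw [integral_of_le hab, integral_of_le hab, ← setIntegral_congr_fun measurableSet_Ioc inner_y,
    ← setIntegral_congr_fun measurableSet_Ioc inner_x]
  exact integral_integral_swap hF

lemma integrableOn_Ioc_of_memLp_two {E : Type*} [NormedAddCommGroup E] {f : ℝ → E} {a b : ℝ}
    (hf : MemLp f 2 (volume.restrict (Ioo a b))) :
    IntegrableOn f (Ioc a b) ∧ IntegrableOn (fun x => ‖f x‖ ^ 2) (Ioc a b) := by
  rw [Measure.restrict_congr_set Ioo_ae_eq_Ioc] at hf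
  exact ⟨hf.integrable one_le_two, hf.norm.integrable_sq⟩

section Moments

variable {g : ℝ → ℂ}

lemma mu1_eq_integral_Iprim (hg : IntegrableOn g (Ioc 0 1)) :
    mu1 g = ∫ x in (0:ℝ)..1, Iprim g x := by
  simp only [Iprim, integral_integral_eq_integral_sub_smul zero_le_one hg, mu1, Complex.real_smul]

lemma continuousOn_Iprim (hg : IntegrableOn g (Ioc 0 1)) : ContinuousOn (Iprim g) (Icc 0 1) := by
  have h := continuousOn_primitive_interval'
    (hg.intervalIntegrable_of_mem_Icc (right_mem_Icc.2 zero_le_one)) left_mem_uIcc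
  rwa [uIcc_of_le zero_le_one] at h

lemma norm_Iprim_le (hg : IntegrableOn g (Ioc 0 1))
    (hg2 : IntegrableOn (fun x => ‖g x‖ ^ 2) (Ioc 0 1)) {x : ℝ} (hx : x ∈ Icc 0 1) :
    ‖Iprim g x‖ ≤ √(x * ∫ y in (0:ℝ)..1, ‖g y‖ ^ 2) :=
  calc ‖Iprim g x‖ ≤ ∫ y in (0:ℝ)..x, ‖g y‖ := norm_integral_le_integral_norm hx.1
    _ ≤ √((x - 0) * ∫ y in (0:ℝ)..1, ‖g y‖ ^ 2) :=
        intervalIntegral_le_sqrt_mul_integral_sq hg.norm hg2 hx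
    _ = √(x * ∫ y in (0:ℝ)..1, ‖g y‖ ^ 2) := by rw [sub_zero]

lemma norm_integral_Iprim_le_sqrt (hg : IntegrableOn g (Ioc 0 1))
    (hg2 : IntegrableOn (fun x => ‖g x‖ ^ 2) (Ioc 0 1)) :
    ‖∫ x in (0:ℝ)..1, Iprim g x‖ ≤ √(∫ y in (0:ℝ)..1, ‖g y‖ ^ 2) := by
  have h := norm_integral_le_of_norm_le_const (a := 0) (b := 1) fun x hx =>
    (norm_Iprim_le hg hg2 (Ioc_subset_Icc_self (by simpa using hx))).trans
      (Real.sqrt_le_sqrt (mul_le_of_le_one_left (integral_nonneg zero_le_one fun y _ =>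
        sq_nonneg _) (by simp at hx; exact hx.2)))
  simpa using h

lemma norm_integral_Iprim_le_of_le_one (hg : IntegrableOn g (Ioc 0 1))
    (hg2 : IntegrableOn (fun x => ‖g x‖ ^ 2) (Ioc 0 1)) {s : ℝ} (hs : 0 < s) (hs1 : s ≤ 1) :
    ‖∫ x in (0:ℝ)..1, Iprim g x‖ ≤
      √(∫ y in (0:ℝ)..1, ‖g y‖ ^ 2) * s + √(∫ y in (0:ℝ)..1, ‖Pfun g y‖ ^ 2) / s := by
  set c := ∫ x in (0:ℝ)..1, Iprim g x
  set A := √(∫ y in (0:ℝ)..1, ‖g y‖ ^ 2)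
  set q := √(∫ y in (0:ℝ)..1, ‖Pfun g y‖ ^ 2)
  have hδ : s ^ 2 ∈ Icc (0:ℝ) 1 := ⟨by positivity, pow_le_one₀ hs.le hs1⟩
  have hPcont : ContinuousOn (fun x => ‖Pfun g x‖) (Icc 0 1) :=
    ((continuousOn_Iprim hg).sub continuousOn_const).norm
  have hP : IntegrableOn (fun x => ‖Pfun g x‖) (Ioc 0 1) :=
    (hPcont.integrableOn_Icc).mono_set Ioc_subset_Icc_self
  have hP2 : IntegrableOn (fun x => ‖Pfun g x‖ ^ 2) (Ioc 0 1) :=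
    ((hPcont.pow 2).integrableOn_Icc).mono_set Ioc_subset_Icc_self
  have hpoint : ∀ x ∈ Icc 0 (s ^ 2), ‖c‖ ≤ A * s + ‖Pfun g x‖ := by
    intro x hx
    have hx1 : x ∈ Icc (0:ℝ) 1 := ⟨hx.1, hx.2.trans hδ.2⟩
    have hI : ‖Iprim g x‖ ≤ A * s := by
      refine (norm_Iprim_le hg hg2 hx1).trans ?_
      rw [mul_comm, Real.sqrt_mul (integral_nonneg zero_le_one fun y _ => sq_nonneg _)]
      exact mul_le_mul_of_nonneg_left ((Real.sqrt_le_sqrt hx.2).trans_eq (Real.sqrt_sq hs.le))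
        (Real.sqrt_nonneg _)
    calc ‖c‖ = ‖Iprim g x - Pfun g x‖ := by simp [Pfun, c]
      _ ≤ ‖Iprim g x‖ + ‖Pfun g x‖ := norm_sub_le _ _
      _ ≤ A * s + ‖Pfun g x‖ := by gcongr
  have hPint : ∫ x in (0:ℝ)..s ^ 2, ‖Pfun g x‖ ≤ s * q := by
    refine (intervalIntegral_le_sqrt_mul_integral_sq hP hP2 hδ).trans_eq ?_
    rw [sub_zero, Real.sqrt_mul (sq_nonneg s), Real.sqrt_sq hs.le]
  have havg : s ^ 2 * ‖c‖ ≤ s ^ 2 * (A * s) + ∫ x in (0:ℝ)..s ^ 2, ‖Pfun g x‖ := by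
    have h := integral_mono_on hδ.1 intervalIntegrable_const
      (intervalIntegrable_const.add (hP.intervalIntegrable_of_mem_Icc hδ)) hpoint
    rwa [intervalIntegral.integral_const, integral_add intervalIntegrable_const
      (hP.intervalIntegrable_of_mem_Icc hδ), intervalIntegral.integral_const, sub_zero,
      smul_eq_mul, smul_eq_mul] at h
  refine le_of_mul_le_mul_left ?_ (pow_pos hs 2)
  calc s ^ 2 * ‖c‖ ≤ s ^ 2 * (A * s) + s * q := havg.trans (by gcongr)
    _ = s ^ 2 * (A * s + q / s) := by field_simp

lemma norm_mu1_le (hg : IntegrableOn g (Ioc 0 1))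
    (hg2 : IntegrableOn (fun x => ‖g x‖ ^ 2) (Ioc 0 1)) {s : ℝ} (hs : 0 < s) :
    ‖mu1 g‖ ≤
      √(∫ y in (0:ℝ)..1, ‖g y‖ ^ 2) * s + √(∫ y in (0:ℝ)..1, ‖Pfun g y‖ ^ 2) / s := by
  rw [mu1_eq_integral_Iprim hg]
  rcases le_or_gt s 1 with hs1 | hs1
  · exact norm_integral_Iprim_le_of_le_one hg hg2 hs hs1
  · calc _ ≤ √(∫ y in (0:ℝ)..1, ‖g y‖ ^ 2) := norm_integral_Iprim_le_sqrt hg hg2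
      _ ≤ √(∫ y in (0:ℝ)..1, ‖g y‖ ^ 2) * s := le_mul_of_one_le_right (by positivity) hs1.le
      _ ≤ _ := le_add_of_nonneg_right (by positivity)

end Moments

/-- Interpolation-type estimate: there is `C > 0` such that for every `g ∈ L²((0,1),ℂ)`,
`|μ₁(g)|² ≤ C ‖g‖_{L²} (‖Pg‖²_{L²} + |μ₀(g)|²)^{1/2}`. -/
theorem stmt9 :
    ∃ C : ℝ, 0 < C ∧
      ∀ g : ℝ → ℂ, MemLp g 2 (volume.restrict (Set.Ioo (0:ℝ) 1)) →
        ‖mu1 g‖ ^ 2 ≤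
          C * (∫ x in (0:ℝ)..1, ‖g x‖ ^ 2) ^ ((1:ℝ)/2) *
            ((∫ x in (0:ℝ)..1, ‖Pfun g x‖ ^ 2) + ‖mu0 g‖ ^ 2) ^ ((1:ℝ)/2) := by
  refine ⟨4, four_pos, fun g hg => ?_⟩
  obtain ⟨hg1, hg2⟩ := integrableOn_Ioc_of_memLp_two hg
  set a := ∫ x in (0:ℝ)..1, ‖g x‖ ^ 2
  set p := ∫ x in (0:ℝ)..1, ‖Pfun g x‖ ^ 2
  have hμ : ‖mu1 g‖ ≤ 2 * √(√a * √p) :=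
    le_two_sqrt_mul_of_forall_le (Real.sqrt_nonneg _) (Real.sqrt_nonneg _)
      fun s hs => norm_mu1_le hg1 hg2 hs
  rw [← Real.sqrt_eq_rpow, ← Real.sqrt_eq_rpow]
  calc ‖mu1 g‖ ^ 2 ≤ (2 * √(√a * √p)) ^ 2 := pow_le_pow_left₀ (norm_nonneg _) hμ 2
    _ = 4 * √a * √p := by rw [mul_pow, Real.sq_sqrt (by positivity)]; ring
    _ ≤ 4 * √a * √(p + ‖mu0 g‖ ^ 2) := by gcongr; exact le_add_of_nonneg_right (sq_nonneg _)
end
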